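/- arXiv:2510.24311 — 3 statements merged into one kernel-verified Lean document; each statement's English description precedes it below -/
import Mathlib

section
/- Let p ≥ 1 be an integer and define F(u,v) = (u_i^{2p} v_i)_{i∈ℤ} for u, v ∈ ℓ²(ℤ). Then there exists a constant C > 0 depending only on p such that for all u1, v1, u2, v2 ∈ ℓ²(ℤ) with u1, u2, v2 ∈ ℓ^{4p}: ‖F(u1,v1) − F(u2,v2)‖² ≤ C (‖u1‖_{4p}^{4p} + ‖u2‖_{4p}^{4p} + ‖v2‖_{4p}^{4p}) (‖u1−u2‖² + ‖v1−v2‖²). -/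
open scoped ENNReal

/-!
Write `a^n b - c^n d = a^n (b - d) + (a^n - c^n) d`. If `R` bounds `|a|, |c|, |d|`, the mean value
bound `|a^n - c^n| ≤ n R^(n-1) |a - c|` makes both terms at most a multiple of `R^n` times a
difference, so the square of each entry of `F(u1,v1) - F(u2,v2)` is at most
`(2 + 2n²) R^(2n) ((a-c)² + (b-d)²)`. With `n = 2p`, the power `R^(4p)` is dominated by
`|u1 i|^(4p) + |u2 i|^(4p) + |v2 i|^(4p)`, hence by the three `ℓ^(4p)` sums, and summing over `i`
gives the claim with `C = 2 + 8p²`.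
-/

lemma sq_pow_mul_sub_pow_mul_le {n : ℕ} (hn : 1 ≤ n) {a b c d R : ℝ}
    (ha : |a| ≤ R) (hc : |c| ≤ R) (hd : |d| ≤ R) :
    (a ^ n * b - c ^ n * d) ^ 2 ≤
      (2 + 2 * n ^ 2) * R ^ (2 * n) * ((a - c) ^ 2 + (b - d) ^ 2) := by
  have hR : 0 ≤ R := (abs_nonneg a).trans ha
  have hfirst : |a ^ n| ≤ R ^ n := by rw [abs_pow]; gcongr
  have hsecond : |a ^ n - c ^ n| * |d| ≤ n * R ^ n * |a - c| :=
    calc |a ^ n - c ^ n| * |d| ≤ (|a - c| * n * R ^ (n - 1)) * R := by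
          gcongr
          exact (abs_pow_sub_pow_le _ _ _).trans (by gcongr; exact max_le ha hc)
      _ = n * R ^ n * |a - c| := by
          rw [mul_assoc, ← pow_succ, Nat.sub_add_cancel hn]; ring
  have hfirst_sq : (a ^ n * (b - d)) ^ 2 ≤ R ^ (2 * n) * (b - d) ^ 2 := by
    rw [mul_pow, ← sq_abs (a ^ n), pow_mul']
    gcongr
  have hsecond_sq : ((a ^ n - c ^ n) * d) ^ 2 ≤ n ^ 2 * R ^ (2 * n) * (a - c) ^ 2 := by
    rw [← sq_abs, abs_mul, ← sq_abs (a - c), pow_mul']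
    calc (|a ^ n - c ^ n| * |d|) ^ 2 ≤ (n * R ^ n * |a - c|) ^ 2 := by gcongr
      _ = n ^ 2 * (R ^ n) ^ 2 * |a - c| ^ 2 := by ring
  calc (a ^ n * b - c ^ n * d) ^ 2 = (a ^ n * (b - d) + (a ^ n - c ^ n) * d) ^ 2 := by ring
    _ ≤ 2 * ((a ^ n * (b - d)) ^ 2 + ((a ^ n - c ^ n) * d) ^ 2) := add_sq_le
    _ ≤ (2 + 2 * n ^ 2) * R ^ (2 * n) * ((a - c) ^ 2 + (b - d) ^ 2) := by
        nlinarith [mul_nonneg (pow_nonneg hR (2 * n)) (sq_nonneg (a - c))]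

lemma pow_max_abs_le_add (n : ℕ) (x y z : ℝ) :
    max |x| (max |y| |z|) ^ n ≤ |x| ^ n + |y| ^ n + |z| ^ n := by
  have hx := pow_nonneg (abs_nonneg x) n
  have hy := pow_nonneg (abs_nonneg y) n
  have hz := pow_nonneg (abs_nonneg z) n
  rcases max_choice |x| (max |y| |z|) with h | h <;> rw [h]
  · linarith
  · rcases max_choice |y| |z| with h' | h' <;> rw [h'] <;> linarith

lemma Memℓp.summable_abs_pow {α : Type*} {u : α → ℝ} (hu : Memℓp u 2) {n : ℕ} (hn : 2 ≤ n) :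
    Summable fun i => |u i| ^ n := by
  have hun : Memℓp u n := hu.of_exponent_ge (by exact_mod_cast hn)
  have hn0 : 0 < (n : ℝ≥0∞).toReal := by
    simp only [ENNReal.toReal_natCast, Nat.cast_pos]; omega
  simpa [Real.norm_eq_abs] using hun.summable hn0

lemma Memℓp.summable_sq {α : Type*} {u : α → ℝ} (hu : Memℓp u 2) : Summable fun i => u i ^ 2 := by
  simpa only [sq_abs] using hu.summable_abs_pow le_rfl

lemma tsum_le_mul_tsum_add_tsum {α : Type*} {f g h : α → ℝ} {K : ℝ} (hf : ∀ i, 0 ≤ f i)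
    (hg : Summable g) (hh : Summable h) (hle : ∀ i, f i ≤ K * (g i + h i)) :
    ∑' i, f i ≤ K * (∑' i, g i + ∑' i, h i) := by
  have hgh : Summable fun i => K * (g i + h i) := (hg.add hh).mul_left K
  calc ∑' i, f i ≤ ∑' i, K * (g i + h i) :=
        (hgh.of_nonneg_of_le hf hle).tsum_le_tsum hle hgh
    _ = K * (∑' i, g i + ∑' i, h i) := by rw [tsum_mul_left, hg.tsum_add hh]

/-- For `F(u,v) = (u_i^{2p} v_i)_i` there is `C > 0` depending only on `p ≥ 1`
such that `‖F(u1,v1) − F(u2,v2)‖² ≤ C(‖u1‖_{4p}^{4p} + ‖u2‖_{4p}^{4p} + ‖v2‖_{4p}^{4p})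
(‖u1−u2‖² + ‖v1−v2‖²)` on `ℓ²(ℤ)`. -/
theorem stmt_6 (p : ℕ) (hp : 1 ≤ p) :
    ∃ C : ℝ, 0 < C ∧
      ∀ u1 v1 u2 v2 : ℤ → ℝ, Memℓp u1 2 → Memℓp v1 2 → Memℓp u2 2 → Memℓp v2 2 →
        (∑' i : ℤ, (u1 i ^ (2 * p) * v1 i - u2 i ^ (2 * p) * v2 i) ^ 2)
          ≤ C * ((∑' i : ℤ, |u1 i| ^ (4 * p)) + (∑' i : ℤ, |u2 i| ^ (4 * p))
              + (∑' i : ℤ, |v2 i| ^ (4 * p)))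
            * ((∑' i : ℤ, (u1 i - u2 i) ^ 2) + (∑' i : ℤ, (v1 i - v2 i) ^ 2)) := by
  refine ⟨2 + 2 * ((2 * p : ℕ) : ℝ) ^ 2, by positivity, ?_⟩
  intro u1 v1 u2 v2 hu1 hv1 hu2 hv2
  have h4p : 2 ≤ 4 * p := by omega
  have term_le_tsum {u : ℤ → ℝ} (hu : Memℓp u 2) (i : ℤ) :
      |u i| ^ (4 * p) ≤ ∑' j, |u j| ^ (4 * p) :=
    (hu.summable_abs_pow h4p).le_tsum i fun j _ => by positivity
  have hmax (i : ℤ) : max |u1 i| (max |u2 i| |v2 i|) ^ (2 * (2 * p)) ≤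
      (∑' i : ℤ, |u1 i| ^ (4 * p)) + (∑' i : ℤ, |u2 i| ^ (4 * p)) + (∑' i : ℤ, |v2 i| ^ (4 * p)) := by
    rw [← mul_assoc]
    exact (pow_max_abs_le_add _ _ _ _).trans
      (add_le_add_three (term_le_tsum hu1 i) (term_le_tsum hu2 i) (term_le_tsum hv2 i))
  refine tsum_le_mul_tsum_add_tsum (fun i => sq_nonneg _) (hu1.sub hu2).summable_sq
    (hv1.sub hv2).summable_sq fun i => ?_
  refine (sq_pow_mul_sub_pow_mul_le (by omega) (le_max_left _ _)
    ((le_max_left _ _).trans (le_max_right _ _))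
    ((le_max_right _ _).trans (le_max_right _ _))).trans ?_
  gcongr
  exact hmax i
end

section
/- Let p ≥ 1 be an integer, b1, b2 > 0, a1, a2 > 0, d1, d2 > 0, Δ > 0, and let A be the discrete Laplacian on ℓ²(ℤ). Define G : ℓ² × ℓ² → ℓ² × ℓ² by G(u,v) = (u + d1·Au·Δ + a1·u·Δ − b1·F(u,v)·Δ + b2·Gp(u)·Δ, v + d2·Av·Δ + a2·v·Δ + b1·F(u,v)·Δ − b2·Gp(u)·Δ), where F(u,v) = (u_i^{2p} v_i)_i and Gp(u) = (u_i^{2p+1})_i. Then with λ = min(a1, a2) and the weighted inner product ⟨(u1,v1),(u2,v2)⟩ = b2(u1,u2)+b1(v1,v2), one has ⟨(u,v), G(u,v)⟩ ≥ (1 + λΔ)(b2‖u‖² + b1‖v‖²) for all u, v ∈ ℓ². -/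
open scoped ENNReal

set_option maxHeartbeats 1000000

open scoped ENNReal

lemma sq_summable (u : ℤ → ℝ) (hu : Memℓp u 2) : Summable (fun i => u i ^ 2) := by
  have h := hu.summable (p := 2) (by norm_num)
  have e : (fun i : ℤ => ‖u i‖ ^ ((2:ℝ≥0∞)).toReal) = fun i => u i ^ 2 := by
    funext i
    rw [show ((2:ℝ≥0∞)).toReal = ((2:ℕ):ℝ) by norm_num, Real.rpow_natCast,
      Real.norm_eq_abs, sq_abs]
  rwa [e] at h

lemma summable_of_abs_le {f g : ℤ → ℝ} (hg : Summable g) (h : ∀ i, |f i| ≤ g i) :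
    Summable f :=
  Summable.of_abs (Summable.of_nonneg_of_le (fun i => abs_nonneg _) h hg)

lemma shift_summable {f : ℤ → ℝ} (hf : Summable f) : Summable (fun i => f (i + 1)) :=
  ((Equiv.addRight (1:ℤ)).summable_iff (f := f)).mpr hf

lemma shift_summable' {f : ℤ → ℝ} (hf : Summable f) : Summable (fun i => f (i - 1)) := by
  have := ((Equiv.addRight (-1:ℤ)).summable_iff (f := f)).mpr hf
  simpa [sub_eq_add_neg, Function.comp_def] using this

lemma shift_tsum (f : ℤ → ℝ) : ∑' i, f (i + 1) = ∑' i, f i :=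
  (Equiv.addRight (1:ℤ)).tsum_eq f

lemma abs_mul_le_half (a b : ℝ) : |a * b| ≤ (a ^ 2 + b ^ 2) / 2 := by
  have h := two_mul_le_add_sq |a| |b|
  rw [abs_mul] at *
  calc |a| * |b| ≤ (|a|^2 + |b|^2)/2 := by linarith
  _ = (a^2+b^2)/2 := by rw [sq_abs, sq_abs]

lemma summable_mul_shift {u : ℤ → ℝ} (hu : Summable (fun i => u i ^ 2)) :
    Summable (fun i => u i * u (i + 1)) := by
  have h1 : Summable (fun i => u (i + 1) ^ 2) := shift_summable hu
  exact summable_of_abs_le ((hu.add h1).div_const 2) (fun i => abs_mul_le_half _ _)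

lemma summable_mul_shift' {u : ℤ → ℝ} (hu : Summable (fun i => u i ^ 2)) :
    Summable (fun i => u i * u (i - 1)) := by
  have h := shift_summable' (summable_mul_shift hu)
  simp only [sub_add_cancel] at h
  exact h.congr (fun i => mul_comm _ _)

lemma lap_summable {u : ℤ → ℝ} (hu : Summable (fun i => u i ^ 2)) :
    Summable (fun i => u i * (-u (i - 1) + 2 * u i - u (i + 1))) := by
  have e : (fun i => (2 * u i ^ 2 - u i * u (i - 1)) - u i * u (i + 1))
      = fun i => u i * (-u (i - 1) + 2 * u i - u (i + 1)) := funext fun i => by ring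
  rw [← e]
  exact ((hu.mul_left 2).sub (summable_mul_shift' hu)).sub (summable_mul_shift hu)

lemma lap_nonneg {u : ℤ → ℝ} (hu : Summable (fun i => u i ^ 2)) :
    0 ≤ ∑' i, u i * (-u (i - 1) + 2 * u i - u (i + 1)) := by
  have hsh : Summable (fun i => u (i + 1) ^ 2) := shift_summable hu
  have hp : Summable (fun i => u i * u (i + 1)) := summable_mul_shift hu
  have hm : Summable (fun i => u i * u (i - 1)) := summable_mul_shift' hu
  have e : (fun i => u i * (-u (i - 1) + 2 * u i - u (i + 1)))
      = fun i => (2 * u i ^ 2 - u i * u (i - 1)) - u i * u (i + 1) :=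
    funext fun i => by ring
  have hmm : ∑' i, u i * u (i - 1) = ∑' i, u i * u (i + 1) := by
    rw [← shift_tsum (fun i => u i * u (i - 1))]
    simp only [add_sub_cancel_right]
    exact tsum_congr fun i => mul_comm _ _
  have hC : ∑' i, u i * u (i + 1) ≤ ∑' i, u i ^ 2 := by
    have hb : ∀ i, u i * u (i + 1) ≤ (u i ^ 2 + u (i + 1) ^ 2) / 2 :=
      fun i => (le_abs_self _).trans (abs_mul_le_half _ _)
    have := Summable.tsum_le_tsum hb hp ((hu.add hsh).div_const 2)
    rwa [tsum_div_const, Summable.tsum_add hu hsh, shift_tsum (fun i => u i ^ 2),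
      add_self_div_two] at this
  rw [e, Summable.tsum_sub ((hu.mul_left 2).sub hm) hp, Summable.tsum_sub (hu.mul_left 2) hm,
    tsum_mul_left, hmm]
  linarith

/-- Coercivity of the backward Euler operator: with `λ = min(a1,a2)` and the
weighted inner product `⟨(u1,v1),(u2,v2)⟩ = b2(u1,u2)+b1(v1,v2)` on
`ℓ²(ℤ) × ℓ²(ℤ)`, one has `⟨(u,v), G(u,v)⟩ ≥ (1 + λΔ)(b2‖u‖² + b1‖v‖²)`, where
`G(u,v) = (u + d1·Au·Δ + a1·u·Δ − b1·F(u,v)·Δ + b2·Gp(u)·Δ,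
           v + d2·Av·Δ + a2·v·Δ + b1·F(u,v)·Δ − b2·Gp(u)·Δ)`,
`F(u,v)_i = u_i^{2p} v_i`, `Gp(u)_i = u_i^{2p+1}`, `(Au)_i = −u_{i−1}+2u_i−u_{i+1}`. -/
theorem stmt_12 (p : ℕ) (hp : 1 ≤ p) (b1 b2 a1 a2 d1 d2 Δ : ℝ)
    (hb1 : 0 < b1) (hb2 : 0 < b2) (ha1 : 0 < a1) (ha2 : 0 < a2)
    (hd1 : 0 < d1) (hd2 : 0 < d2) (hΔ : 0 < Δ)
    (u v : ℤ → ℝ) (hu : Memℓp u 2) (hv : Memℓp v 2) :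
    (1 + min a1 a2 * Δ) * (b2 * (∑' i : ℤ, (u i) ^ 2) + b1 * ∑' i : ℤ, (v i) ^ 2)
      ≤ b2 * (∑' i : ℤ, u i *
            (u i + d1 * (-u (i - 1) + 2 * u i - u (i + 1)) * Δ + a1 * u i * Δ
              - b1 * (u i ^ (2 * p) * v i) * Δ + b2 * u i ^ (2 * p + 1) * Δ))
        + b1 * ∑' i : ℤ, v i *
            (v i + d2 * (-v (i - 1) + 2 * v i - v (i + 1)) * Δ + a2 * v i * Δ
              + b1 * (u i ^ (2 * p) * v i) * Δ - b2 * u i ^ (2 * p + 1) * Δ) := by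
  have sU : Summable (fun i => u i ^ 2) := sq_summable u hu
  have sV : Summable (fun i => v i ^ 2) := sq_summable v hv
  set A := ∑' i : ℤ, u i ^ 2 with hAdef
  set B := ∑' i : ℤ, v i ^ 2 with hBdef
  have hA : 0 ≤ A := tsum_nonneg fun i => sq_nonneg _
  have hB : 0 ≤ B := tsum_nonneg fun i => sq_nonneg _
  have hle : ∀ i, u i ^ 2 ≤ A := fun i => Summable.le_tsum sU i fun j _ => sq_nonneg _
  have hev : ∀ i, (0:ℝ) ≤ u i ^ (2 * p) := fun i => by
    rw [pow_mul]; exact pow_nonneg (sq_nonneg _) p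
  have hbd : ∀ i, u i ^ (2 * p) ≤ A ^ p := fun i => by
    rw [pow_mul]; exact pow_le_pow_left₀ (sq_nonneg _) (hle i) p
  have sUVabs : Summable (fun i => |u i * v i|) :=
    Summable.of_nonneg_of_le (fun _ => abs_nonneg _) (fun i => abs_mul_le_half _ _)
      ((sU.add sV).div_const 2)
  have sP : Summable (fun i => u i ^ (2 * p + 1) * v i) := by
    refine summable_of_abs_le (sUVabs.mul_left (A ^ p)) (fun i => ?_)
    have e : u i ^ (2 * p + 1) * v i = u i ^ (2 * p) * (u i * v i) := by ring
    rw [e, abs_mul, abs_of_nonneg (hev i)]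
    exact mul_le_mul_of_nonneg_right (hbd i) (abs_nonneg _)
  have sQ : Summable (fun i => u i ^ (2 * p + 2)) := by
    refine summable_of_abs_le (sU.mul_left (A ^ p)) (fun i => ?_)
    have e : u i ^ (2 * p + 2) = u i ^ (2 * p) * u i ^ 2 := by ring
    rw [e, abs_mul, abs_of_nonneg (hev i), abs_of_nonneg (sq_nonneg _)]
    exact mul_le_mul_of_nonneg_right (hbd i) (sq_nonneg _)
  have sR : Summable (fun i => u i ^ (2 * p) * v i ^ 2) := by
    refine summable_of_abs_le (sV.mul_left (A ^ p)) (fun i => ?_)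
    rw [abs_mul, abs_of_nonneg (hev i), abs_of_nonneg (sq_nonneg _)]
    exact mul_le_mul_of_nonneg_right (hbd i) (sq_nonneg _)
  have sLu : Summable (fun i => u i * (-u (i - 1) + 2 * u i - u (i + 1))) := lap_summable sU
  have sLv : Summable (fun i => v i * (-v (i - 1) + 2 * v i - v (i + 1))) := lap_summable sV
  set Tu := ∑' i : ℤ, u i * (-u (i - 1) + 2 * u i - u (i + 1)) with hTudef
  set Tv := ∑' i : ℤ, v i * (-v (i - 1) + 2 * v i - v (i + 1)) with hTvdef
  set P := ∑' i : ℤ, u i ^ (2 * p + 1) * v i with hPdef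
  set Q := ∑' i : ℤ, u i ^ (2 * p + 2) with hQdef
  set R := ∑' i : ℤ, u i ^ (2 * p) * v i ^ 2 with hRdef
  have hTu : 0 ≤ Tu := lap_nonneg sU
  have hTv : 0 ≤ Tv := lap_nonneg sV
  have h1 : ∑' i : ℤ, u i *
        (u i + d1 * (-u (i - 1) + 2 * u i - u (i + 1)) * Δ + a1 * u i * Δ
          - b1 * (u i ^ (2 * p) * v i) * Δ + b2 * u i ^ (2 * p + 1) * Δ)
      = A + d1 * Δ * Tu + a1 * Δ * A - b1 * Δ * P + b2 * Δ * Q := by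
    have e : (fun i => u i *
        (u i + d1 * (-u (i - 1) + 2 * u i - u (i + 1)) * Δ + a1 * u i * Δ
          - b1 * (u i ^ (2 * p) * v i) * Δ + b2 * u i ^ (2 * p + 1) * Δ))
        = fun i => u i ^ 2 + ((d1 * Δ) * (u i * (-u (i - 1) + 2 * u i - u (i + 1)))
          + ((a1 * Δ) * u i ^ 2 + ((-(b1 * Δ)) * (u i ^ (2 * p + 1) * v i)
            + (b2 * Δ) * (u i ^ (2 * p + 2))))) := funext fun i => by ring
    rw [e, Summable.tsum_add sU ((sLu.mul_left _).add ((sU.mul_left _).add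
        ((sP.mul_left _).add (sQ.mul_left _)))),
      Summable.tsum_add (sLu.mul_left _) ((sU.mul_left _).add ((sP.mul_left _).add (sQ.mul_left _))),
      Summable.tsum_add (sU.mul_left _) ((sP.mul_left _).add (sQ.mul_left _)),
      Summable.tsum_add (sP.mul_left _) (sQ.mul_left _),
      tsum_mul_left, tsum_mul_left, tsum_mul_left, tsum_mul_left]
    ring
  have h2 : ∑' i : ℤ, v i *
        (v i + d2 * (-v (i - 1) + 2 * v i - v (i + 1)) * Δ + a2 * v i * Δ
          + b1 * (u i ^ (2 * p) * v i) * Δ - b2 * u i ^ (2 * p + 1) * Δ)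
      = B + d2 * Δ * Tv + a2 * Δ * B + b1 * Δ * R - b2 * Δ * P := by
    have e : (fun i => v i *
        (v i + d2 * (-v (i - 1) + 2 * v i - v (i + 1)) * Δ + a2 * v i * Δ
          + b1 * (u i ^ (2 * p) * v i) * Δ - b2 * u i ^ (2 * p + 1) * Δ))
        = fun i => v i ^ 2 + ((d2 * Δ) * (v i * (-v (i - 1) + 2 * v i - v (i + 1)))
          + ((a2 * Δ) * v i ^ 2 + ((b1 * Δ) * (u i ^ (2 * p) * v i ^ 2)
            + (-(b2 * Δ)) * (u i ^ (2 * p + 1) * v i)))) := funext fun i => by ring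
    rw [e, Summable.tsum_add sV ((sLv.mul_left _).add ((sV.mul_left _).add
        ((sR.mul_left _).add (sP.mul_left _)))),
      Summable.tsum_add (sLv.mul_left _) ((sV.mul_left _).add ((sR.mul_left _).add (sP.mul_left _))),
      Summable.tsum_add (sV.mul_left _) ((sR.mul_left _).add (sP.mul_left _)),
      Summable.tsum_add (sR.mul_left _) (sP.mul_left _),
      tsum_mul_left, tsum_mul_left, tsum_mul_left, tsum_mul_left]
    ring
  have hW : 0 ≤ b2 ^ 2 * Q - 2 * b1 * b2 * P + b1 ^ 2 * R := by
    have h0 : 0 ≤ ∑' i : ℤ, u i ^ (2 * p) * (b2 * u i - b1 * v i) ^ 2 :=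
      tsum_nonneg fun i => mul_nonneg (hev i) (sq_nonneg _)
    have e : (fun i => u i ^ (2 * p) * (b2 * u i - b1 * v i) ^ 2)
        = fun i => (b2 ^ 2) * (u i ^ (2 * p + 2)) + ((-(2 * b1 * b2)) * (u i ^ (2 * p + 1) * v i)
          + (b1 ^ 2) * (u i ^ (2 * p) * v i ^ 2)) := funext fun i => by ring
    rw [e, Summable.tsum_add (sQ.mul_left _) ((sP.mul_left _).add (sR.mul_left _)),
      Summable.tsum_add (sP.mul_left _) (sR.mul_left _),
      tsum_mul_left, tsum_mul_left, tsum_mul_left] at h0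
    linarith
  rw [h1, h2]
  have hm1 : min a1 a2 ≤ a1 := min_le_left _ _
  have hm2 : min a1 a2 ≤ a2 := min_le_right _ _
  nlinarith [mul_nonneg (mul_nonneg (mul_nonneg hb2.le (sub_nonneg.2 hm1)) hΔ.le) hA,
    mul_nonneg (mul_nonneg (mul_nonneg hb1.le (sub_nonneg.2 hm2)) hΔ.le) hB,
    mul_nonneg (mul_nonneg (mul_nonneg hb2.le hd1.le) hΔ.le) hTu,
    mul_nonneg (mul_nonneg (mul_nonneg hb1.le hd2.le) hΔ.le) hTv,
    mul_nonneg hΔ.le hW]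
end

section
/- Let θ : ℝ≥0 → [0,1] be continuously differentiable with θ(s) = 0 for 0 ≤ s ≤ 1 and θ(s) = 1 for s ≥ 2, and suppose |θ'| ≤ c₀. Then for any n ∈ ℕ, n ≥ 1, and any u ∈ ℓ²(ℤ): −(Bu, B(θ_n² u)) ≤ (c(θ)/n)‖u‖², where (Bu)_i = u_{i+1}−u_i, θ_n = (θ(|i|/n))_{i∈ℤ}, (θ_n² u)_i = θ(|i|/n)² u_i, and c(θ) is a constant depending only on θ (e.g. c(θ) = 4c₀). -/
open scoped ENNReal

private lemma key_ineq (p q x y d : ℝ) (hp : 0 ≤ p) (hd0 : 0 ≤ d) (hd : |p - q| ≤ d) :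
    -(d * (x ^ 2 / 2 + 3 * y ^ 2 / 2)) ≤ (x - y) * (p * x - q * y) := by
  obtain ⟨h1, h2⟩ := abs_le.mp hd
  rcases le_or_gt 0 ((x - y) * y) with h | h
  · nlinarith [mul_nonneg hp (sq_nonneg (x - y)), mul_nonneg (by linarith : (0:ℝ) ≤ p - q + d) h,
      mul_nonneg hd0 (sq_nonneg (x - y)), mul_nonneg hd0 (sq_nonneg y),
      mul_nonneg hd0 (sq_nonneg (x + y))]
  · nlinarith [mul_nonneg hp (sq_nonneg (x - y)),
      mul_nonneg (by linarith : (0:ℝ) ≤ d - (p - q)) (le_of_lt (neg_pos.mpr h)),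
      mul_nonneg hd0 (sq_nonneg (x - y)), mul_nonneg hd0 (sq_nonneg y),
      mul_nonneg hd0 (sq_nonneg (x + y))]

set_option maxHeartbeats 1000000 in
/-- Cutoff estimate: if `θ` is `C¹` with values in `[0,1]`, `θ = 0` on `[0,1]`,
`θ = 1` on `[2,∞)`, `|θ'| ≤ c₀`, then for `n ≥ 1` and `u ∈ ℓ²(ℤ)`,
`−(Bu, B(θ_n² u)) ≤ (4c₀/n)‖u‖²` where `(Bu)_i = u_{i+1}−u_i` and
`(θ_n)_i = θ(|i|/n)`. -/
theorem stmt_18 (θ : ℝ → ℝ) (c₀ : ℝ) (hc₀ : 0 ≤ c₀)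
    (hθC1 : ContDiff ℝ 1 θ)
    (hθ01 : ∀ s, 0 ≤ s → θ s ∈ Set.Icc (0 : ℝ) 1)
    (hθ0 : ∀ s, 0 ≤ s → s ≤ 1 → θ s = 0)
    (hθ1 : ∀ s, 2 ≤ s → θ s = 1)
    (hθ' : ∀ s, |deriv θ s| ≤ c₀)
    (n : ℕ) (hn : 1 ≤ n) (u : ℤ → ℝ) (hu : Memℓp u 2) :
    -(∑' i : ℤ, (u (i + 1) - u i) *
        (θ (|(i : ℝ) + 1| / (n : ℝ)) ^ 2 * u (i + 1) - θ (|(i : ℝ)| / (n : ℝ)) ^ 2 * u i))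
      ≤ (4 * c₀ / n) * ∑' i : ℤ, (u i) ^ 2 := by
  have hn0 : (0 : ℝ) < n := by exact_mod_cast hn
  -- summability of squares
  have hS : Summable (fun i : ℤ => (u i) ^ 2) := by
    have := hu.summable (p := 2) (by norm_num)
    simpa [Real.rpow_natCast, ENNReal.toReal_ofNat, Real.norm_eq_abs, sq_abs,
      Real.rpow_two] using this
  have hS1 : Summable (fun i : ℤ => (u (i + 1)) ^ 2) :=
    (Equiv.addRight (1 : ℤ)).summable_iff.mpr hS
  -- abbreviations
  set s : ℤ → ℝ := fun i => |(i : ℝ)| / (n : ℝ) with hs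
  set s' : ℤ → ℝ := fun i => |(i : ℝ) + 1| / (n : ℝ) with hs'
  have hsnn : ∀ i : ℤ, 0 ≤ s i := fun i => div_nonneg (abs_nonneg _) hn0.le
  have hs'nn : ∀ i : ℤ, 0 ≤ s' i := fun i => div_nonneg (abs_nonneg _) hn0.le
  have hθ0le : ∀ i : ℤ, 0 ≤ θ (s i) ∧ θ (s i) ≤ 1 := fun i => (hθ01 _ (hsnn i))
  have hθ'0le : ∀ i : ℤ, 0 ≤ θ (s' i) ∧ θ (s' i) ≤ 1 := fun i => (hθ01 _ (hs'nn i))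
  -- Lipschitz bound
  have lip : LipschitzWith ⟨c₀, hc₀⟩ θ :=
    lipschitzWith_of_nnnorm_deriv_le (hθC1.differentiable one_ne_zero) fun x => by
      show (‖deriv θ x‖₊ : ℝ) ≤ c₀
      rw [coe_nnnorm, Real.norm_eq_abs]; exact hθ' x
  -- key bound on the difference of squared cutoffs
  have hdiff : ∀ i : ℤ, |θ (s' i) ^ 2 - θ (s i) ^ 2| ≤ 2 * c₀ / n := by
    intro i
    have h1 : |θ (s' i) - θ (s i)| ≤ c₀ * |s' i - s i| := by
      have := lip.dist_le_mul (s' i) (s i)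
      simp only [Real.dist_eq] at this; exact this
    have h2 : |s' i - s i| ≤ 1 / n := by
      rw [hs, hs', div_sub_div_same, abs_div, abs_of_pos hn0]
      gcongr
      calc |(|(i : ℝ) + 1| - |(i : ℝ)|)| ≤ |((i : ℝ) + 1) - i| := abs_abs_sub_abs_le_abs_sub _ _
        _ = 1 := by norm_num
    have h3 : |θ (s' i) + θ (s i)| ≤ 2 := by
      rw [abs_of_nonneg (by linarith [(hθ0le i).1, (hθ'0le i).1])]
      linarith [(hθ0le i).2, (hθ'0le i).2]
    calc |θ (s' i) ^ 2 - θ (s i) ^ 2| = |θ (s' i) - θ (s i)| * |θ (s' i) + θ (s i)| := by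
          rw [← abs_mul]; ring_nf
      _ ≤ (c₀ * (1 / n)) * 2 := by
          apply mul_le_mul (h1.trans (by nlinarith [abs_nonneg (s' i - s i)])) h3
            (abs_nonneg _) (by positivity)
      _ = 2 * c₀ / n := by ring
  -- the summand and the dominating sequence
  set f : ℤ → ℝ := fun i => (u (i + 1) - u i) *
    (θ (s' i) ^ 2 * u (i + 1) - θ (s i) ^ 2 * u i) with hf_def
  set h : ℤ → ℝ := fun i =>
    (2 * c₀ / n) * ((u (i + 1)) ^ 2 / 2 + 3 * (u i) ^ 2 / 2) with hh_def
  have hd0 : (0 : ℝ) ≤ 2 * c₀ / n := by positivity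
  have hpt : ∀ i, -h i ≤ f i := fun i =>
    key_ineq _ _ _ _ _ (sq_nonneg _) hd0 (hdiff i)
  have hhsum : Summable h := by
    apply Summable.mul_left
    exact ((hS1.div_const 2).add ((hS.mul_left 3).div_const 2))
  have hfsum : Summable f := by
    apply Summable.of_abs
    refine Summable.of_nonneg_of_le (fun i => abs_nonneg _) (fun i => ?_)
      ((hS1.mul_left 2).add (hS.mul_left 2))
    rw [hf_def, abs_mul]
    have hb : |θ (s' i) ^ 2 * u (i + 1) - θ (s i) ^ 2 * u i| ≤ |u (i + 1)| + |u i| := by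
      refine (abs_sub _ _).trans ?_
      rw [abs_mul, abs_mul]
      have e1 : |θ (s' i) ^ 2| ≤ 1 := by
        rw [abs_of_nonneg (sq_nonneg _)]; nlinarith [(hθ'0le i).1, (hθ'0le i).2]
      have e2 : |θ (s i) ^ 2| ≤ 1 := by
        rw [abs_of_nonneg (sq_nonneg _)]; nlinarith [(hθ0le i).1, (hθ0le i).2]
      have := abs_nonneg (u (i+1)); have := abs_nonneg (u i)
      nlinarith
    have ha : |u (i + 1) - u i| ≤ |u (i + 1)| + |u i| := abs_sub _ _
    calc |u (i + 1) - u i| * |θ (s' i) ^ 2 * u (i + 1) - θ (s i) ^ 2 * u i|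
        ≤ (|u (i + 1)| + |u i|) * (|u (i + 1)| + |u i|) :=
          mul_le_mul ha hb (abs_nonneg _) (by positivity)
      _ ≤ 2 * (u (i + 1)) ^ 2 + 2 * (u i) ^ 2 := by
          nlinarith [sq_abs (u (i+1)), sq_abs (u i), sq_nonneg (|u (i+1)| - |u i|)]
  -- conclude
  have h1 : -(∑' i, f i) ≤ ∑' i, h i := by
    rw [neg_le, ← tsum_neg]
    exact Summable.tsum_le_tsum hpt hhsum.neg hfsum
  have h2 : ∑' i, h i = (4 * c₀ / n) * ∑' i, (u i) ^ 2 := by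
    have e : ∀ i : ℤ, h i = (c₀ / n) * (u (i + 1)) ^ 2 + (3 * c₀ / n) * (u i) ^ 2 := by
      intro i; rw [hh_def]; ring
    calc ∑' i, h i = ∑' i : ℤ, ((c₀ / n) * (u (i + 1)) ^ 2 + (3 * c₀ / n) * (u i) ^ 2) :=
          tsum_congr e
      _ = (c₀ / n) * (∑' i : ℤ, (u (i + 1)) ^ 2) + (3 * c₀ / n) * ∑' i : ℤ, (u i) ^ 2 := by
          rw [Summable.tsum_add (hS1.mul_left _) (hS.mul_left _), tsum_mul_left, tsum_mul_left]
      _ = (4 * c₀ / n) * ∑' i, (u i) ^ 2 := by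
          have hshift : (∑' i : ℤ, (u (i + 1)) ^ 2) = ∑' i : ℤ, (u i) ^ 2 := by
            simpa using (Equiv.addRight (1 : ℤ)).tsum_eq (fun i => (u i) ^ 2)
          rw [hshift]; ring
  calc -(∑' i : ℤ, (u (i + 1) - u i) *
        (θ (|(i : ℝ) + 1| / (n : ℝ)) ^ 2 * u (i + 1) - θ (|(i : ℝ)| / (n : ℝ)) ^ 2 * u i))
      = -(∑' i, f i) := rfl
    _ ≤ ∑' i, h i := h1
    _ = (4 * c₀ / n) * ∑' i, (u i) ^ 2 := h2
end
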